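/- arXiv:2303.03587 — 7 statements merged into one kernel-verified Lean document; each statement's English description precedes it below -/
import Mathlib

section
/- Let X = ℝ³ with the 3-norm, J its normalized duality map, v = (3,−2,−1), w = (1,−3,2), and y = (25,37,77). Then ⟨Jv, y⟩ = 0 and ⟨Jw, y⟩ = 0, but for g = (2/3)v + (1/3)w = (7/3, −7/3, 0) one has ⟨Jg, y⟩ = −14·∛4 < 0. Consequently the set {x ∈ ℝ³ : ⟨Jx, y⟩ ≥ 0} is not convex. -/
/-- The 3-norm on ℝ³. -/
noncomputable def norm3 (z : ℝ × ℝ × ℝ) : ℝ :=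
  (|z.1| ^ 3 + |z.2.1| ^ 3 + |z.2.2| ^ 3) ^ ((1 : ℝ) / 3)

/-- The 3/2-norm on the dual of (ℝ³, ‖·‖₃). -/
noncomputable def norm32 (ψ : ℝ × ℝ × ℝ) : ℝ :=
  (|ψ.1| ^ ((3 : ℝ) / 2) + |ψ.2.1| ^ ((3 : ℝ) / 2) + |ψ.2.2| ^ ((3 : ℝ) / 2)) ^ ((2 : ℝ) / 3)

/-- The normalized duality map of (ℝ³, ‖·‖₃), with J 0 = 0. -/
noncomputable def Jmap (z : ℝ × ℝ × ℝ) : ℝ × ℝ × ℝ :=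
  if z = 0 then 0
  else (|z.1| ^ 2 * Real.sign z.1 / norm3 z,
        |z.2.1| ^ 2 * Real.sign z.2.1 / norm3 z,
        |z.2.2| ^ 2 * Real.sign z.2.2 / norm3 z)

/-- The standard pairing (dot product) between ℝ³ and its dual. -/
def dot (a b : ℝ × ℝ × ℝ) : ℝ := a.1 * b.1 + a.2.1 * b.2.1 + a.2.2 * b.2.2

lemma cube_root_cube : ((2:ℝ) ^ ((1:ℝ)/3)) ^ (3:ℕ) = 2 := by
  rw [← Real.rpow_natCast ((2:ℝ) ^ ((1:ℝ)/3)) 3, ← Real.rpow_mul (by norm_num)]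
  norm_num

lemma four_third : (4:ℝ) ^ ((1:ℝ)/3) = ((2:ℝ) ^ ((1:ℝ)/3)) ^ (2:ℕ) := by
  rw [← Real.rpow_natCast ((2:ℝ) ^ ((1:ℝ)/3)) 2, ← Real.rpow_mul (by norm_num),
    show (4:ℝ) = (2:ℝ) ^ ((2:ℕ):ℝ) by rw [Real.rpow_natCast]; norm_num,
    ← Real.rpow_mul (by norm_num : (0:ℝ) ≤ 2)]
  norm_num

lemma norm3_g : norm3 ((7:ℝ)/3, -(7:ℝ)/3, 0) = (7/3) * (2:ℝ) ^ ((1:ℝ)/3) := by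
  unfold norm3
  have h : |(7:ℝ)/3| ^ 3 + |(-(7:ℝ)/3)| ^ 3 + |(0:ℝ)| ^ 3 = ((7:ℝ)/3) ^ ((3:ℕ):ℝ) * 2 := by
    rw [Real.rpow_natCast]
    rw [abs_of_pos (by norm_num), abs_of_neg (by norm_num), abs_zero]
    ring
  rw [h, Real.mul_rpow (by positivity) (by norm_num), ← Real.rpow_mul (by norm_num)]
  norm_num

/-- ⟨Jv,y⟩ = ⟨Jw,y⟩ = 0 but ⟨Jg,y⟩ = −14∛4 < 0 for the convex
combination g; hence {x : ⟨Jx,y⟩ ≥ 0} is not convex. -/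
theorem stmt1 :
    let v : ℝ × ℝ × ℝ := (3, -2, -1)
    let w : ℝ × ℝ × ℝ := (1, -3, 2)
    let y : ℝ × ℝ × ℝ := (25, 37, 77)
    let g : ℝ × ℝ × ℝ := (2 / 3 : ℝ) • v + (1 / 3 : ℝ) • w
    g = ((7 : ℝ) / 3, -(7 : ℝ) / 3, 0) ∧
    dot (Jmap v) y = 0 ∧ dot (Jmap w) y = 0 ∧
    dot (Jmap g) y = -14 * (4 : ℝ) ^ ((1 : ℝ) / 3) ∧
    dot (Jmap g) y < 0 ∧
    ¬ Convex ℝ {x : ℝ × ℝ × ℝ | 0 ≤ dot (Jmap x) y} := by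
  intro v w y g
  have hg : g = ((7 : ℝ) / 3, -(7 : ℝ) / 3, 0) := by
    simp only [g, v, w, Prod.smul_mk, Prod.mk_add_mk, smul_eq_mul]
    norm_num
  have hvne : v ≠ 0 := by simp [v, Prod.ext_iff]
  have hwne : w ≠ 0 := by simp [w, Prod.ext_iff]
  have hgne : g ≠ 0 := by rw [hg]; simp [Prod.ext_iff]
  -- dot for v
  have hv : dot (Jmap v) y = 0 := by
    have hn : norm3 v = (36:ℝ) ^ ((1:ℝ)/3) := by
      unfold norm3; norm_num [v]
    rw [Jmap, if_neg hvne, hn]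
    simp only [v, y, dot]
    rw [Real.sign_of_pos (by norm_num : (0:ℝ) < 3),
        Real.sign_of_neg (by norm_num : (-2:ℝ) < 0),
        Real.sign_of_neg (by norm_num : (-1:ℝ) < 0)]
    norm_num
    ring
  have hw : dot (Jmap w) y = 0 := by
    have hn : norm3 w = (36:ℝ) ^ ((1:ℝ)/3) := by
      unfold norm3; norm_num [w]
    rw [Jmap, if_neg hwne, hn]
    simp only [w, y, dot]
    rw [Real.sign_of_pos (by norm_num : (0:ℝ) < 1),
        Real.sign_of_neg (by norm_num : (-3:ℝ) < 0),
        Real.sign_of_pos (by norm_num : (0:ℝ) < 2)]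
    norm_num
    ring
  have hG : dot (Jmap g) y = -14 * (4 : ℝ) ^ ((1 : ℝ) / 3) := by
    rw [Jmap, if_neg hgne, hg, norm3_g]
    simp only [dot, y]
    rw [Real.sign_of_pos (by norm_num : (0:ℝ) < 7/3),
        Real.sign_of_neg (by norm_num : (-(7:ℝ)/3) < 0),
        four_third]
    set c := (2:ℝ) ^ ((1:ℝ)/3) with hc
    have hcpos : 0 < c := by positivity
    have hc3 : c ^ (3:ℕ) = 2 := cube_root_cube
    rw [Real.sign_zero]
    field_simp
    nlinarith [hc3, hcpos]
  refine ⟨hg, hv, hw, hG, ?_, ?_⟩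
  · rw [hG]; nlinarith [Real.rpow_pos_of_pos (by norm_num : (0:ℝ) < 4) ((1:ℝ)/3)]
  · intro hconv
    have hvmem : v ∈ {x : ℝ × ℝ × ℝ | 0 ≤ dot (Jmap x) y} := by simp [hv]
    have hwmem : w ∈ {x : ℝ × ℝ × ℝ | 0 ≤ dot (Jmap x) y} := by simp [hw]
    have := hconv hvmem hwmem (by norm_num : (0:ℝ) ≤ 2/3) (by norm_num : (0:ℝ) ≤ 1/3) (by norm_num)
    have hgmem : (0:ℝ) ≤ dot (Jmap g) y := this
    rw [hG] at hgmem
    nlinarith [Real.rpow_pos_of_pos (by norm_num : (0:ℝ) < 4) ((1:ℝ)/3)]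
end

section
/- Let X = ℝ³ with the 3-norm and J its duality map. Let v = (3,−2,−1), w = (1,−3,2), y = (25,37,77), and ψ = (−β,−β,−β) with 0 < β < 14·∛4/139. Then ⟨Jv − ψ, y⟩ > 0 and ⟨Jw − ψ, y⟩ > 0, but for g = (2/3)v + (1/3)w one has ⟨Jg − ψ, y⟩ = −14·∛4 + 139β < 0. Hence {x ∈ ℝ³ : ⟨Jx − ψ, y⟩ ≥ 0} is not convex. -/
/-!
The map `J` is not linear: up to the factor `1 / ‖z‖₃` it sends `z` to its vector of signed
squares `(z₁|z₁|, z₂|z₂|, z₃|z₃|)`. For `v = (3,-2,-1)` and `w = (1,-3,2)` these are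
`(9,-4,-1)` and `(1,-9,4)`, both orthogonal to `y`, so `⟨Jv - ψ, y⟩ = ⟨Jw - ψ, y⟩ = 139β > 0`.
The convex combination `g = (7/3,-7/3,0)` has signed squares `(49/9,-49/9,0)` and
`‖g‖₃ = (686/27)^{1/3}`, giving `⟨Jg, y⟩ = -14∛4`, which beats `139β` when `β` is small.
-/

lemma rpow_one_third_pow_three {x : ℝ} (hx : 0 ≤ x) : (x ^ ((1 : ℝ) / 3)) ^ 3 = x := by
  rw [one_div, ← Nat.cast_ofNat, Real.rpow_inv_natCast_pow hx three_ne_zero]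

lemma norm3_pow_three (z : ℝ × ℝ × ℝ) :
    norm3 z ^ 3 = |z.1| ^ 3 + |z.2.1| ^ 3 + |z.2.2| ^ 3 :=
  rpow_one_third_pow_three (by positivity)

lemma abs_sq_mul_sign (a : ℝ) : |a| ^ 2 * Real.sign a = a * |a| := by
  rcases lt_trichotomy a 0 with ha | rfl | ha
  · rw [Real.sign_of_neg ha, abs_of_neg ha]; ring
  · simp
  · rw [Real.sign_of_pos ha, abs_of_pos ha]; ring

lemma dot_sub_left (a b c : ℝ × ℝ × ℝ) : dot (a - b) c = dot a c - dot b c := by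
  simp only [dot, Prod.fst_sub, Prod.snd_sub]
  ring

lemma dot_Jmap_of_ne_zero {z : ℝ × ℝ × ℝ} (hz : z ≠ 0) (y : ℝ × ℝ × ℝ) :
    dot (Jmap z) y = dot (z.1 * |z.1|, z.2.1 * |z.2.1|, z.2.2 * |z.2.2|) y / norm3 z := by
  simp only [Jmap, if_neg hz, dot, abs_sq_mul_sign]
  ring

lemma dot_Jmap_seven_thirds :
    dot (Jmap (7 / 3, -7 / 3, 0)) (25, 37, 77) = -14 * (4 : ℝ) ^ ((1 : ℝ) / 3) := by
  set z : ℝ × ℝ × ℝ := (7 / 3, -7 / 3, 0)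
  have hn3 : norm3 z ^ 3 = 686 / 27 := by rw [norm3_pow_three]; norm_num [z, abs_of_pos]
  have hn : 0 < norm3 z := (Odd.pow_pos_iff (n := 3) (by decide)).1 (by rw [hn3]; norm_num)
  have hn_eq : 14 * (4 : ℝ) ^ ((1 : ℝ) / 3) * norm3 z = 196 / 3 := by
    refine (pow_left_inj₀ (by positivity) (by norm_num) three_ne_zero).1 ?_
    rw [mul_pow, mul_pow, rpow_one_third_pow_three (by norm_num), hn3]; norm_num
  have hsq : dot (z.1 * |z.1|, z.2.1 * |z.2.1|, z.2.2 * |z.2.2|) (25, 37, 77) = -196 / 3 := by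
    norm_num [z, dot, abs_of_pos]
  rw [dot_Jmap_of_ne_zero (by simp [z]), hsq]
  field_simp
  linarith

/-- with ψ = (−β,−β,−β), 0 < β < 14∛4/139, the set
{x : ⟨Jx − ψ, y⟩ ≥ 0} is not convex. -/
theorem stmt3 (β : ℝ) (hβ : 0 < β) (hβ' : β < 14 * (4 : ℝ) ^ ((1 : ℝ) / 3) / 139) :
    let v : ℝ × ℝ × ℝ := (3, -2, -1)
    let w : ℝ × ℝ × ℝ := (1, -3, 2)
    let y : ℝ × ℝ × ℝ := (25, 37, 77)
    let ψ : ℝ × ℝ × ℝ := (-β, -β, -β)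
    let g : ℝ × ℝ × ℝ := (2 / 3 : ℝ) • v + (1 / 3 : ℝ) • w
    0 < dot (Jmap v - ψ) y ∧ 0 < dot (Jmap w - ψ) y ∧
    dot (Jmap g - ψ) y = -14 * (4 : ℝ) ^ ((1 : ℝ) / 3) + 139 * β ∧
    dot (Jmap g - ψ) y < 0 ∧
    ¬ Convex ℝ {x : ℝ × ℝ × ℝ | 0 ≤ dot (Jmap x - ψ) y} := by
  intro v w y ψ g
  have hψ (x : ℝ × ℝ × ℝ) : dot (x - ψ) y = dot x y + 139 * β := by
    rw [dot_sub_left]; simp only [dot, ψ, y]; ring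
  have hv : dot (Jmap v) y = 0 := by
    rw [dot_Jmap_of_ne_zero (by simp [v])]; norm_num [dot, v, y]
  have hw : dot (Jmap w) y = 0 := by
    rw [dot_Jmap_of_ne_zero (by simp [w])]; norm_num [dot, w, y]
  have hg : g = (7 / 3, -7 / 3, 0) := by
    simp only [g, v, w, Prod.smul_mk, smul_eq_mul, Prod.mk_add_mk]; norm_num
  have hv_pos : 0 < dot (Jmap v - ψ) y := by rw [hψ, hv]; positivity
  have hw_pos : 0 < dot (Jmap w - ψ) y := by rw [hψ, hw]; positivity
  have hg_eq : dot (Jmap g - ψ) y = -14 * (4 : ℝ) ^ ((1 : ℝ) / 3) + 139 * β := by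
    rw [hψ, hg, dot_Jmap_seven_thirds]
  have hg_neg : dot (Jmap g - ψ) y < 0 := by
    rw [hg_eq]; linarith [(lt_div_iff₀ (by norm_num : (0 : ℝ) < 139)).1 hβ']
  refine ⟨hv_pos, hw_pos, hg_eq, hg_neg, fun hconv => hg_neg.not_ge ?_⟩
  exact hconv hv_pos.le hw_pos.le (by norm_num : (0 : ℝ) ≤ 2 / 3) (by norm_num : (0 : ℝ) ≤ 1 / 3)
    (by norm_num)
end

section
/- Let X = ℝ³ with the 3-norm, y = (25,37,77), C = {ty : t ∈ [0,1]}, x = (28,35,76) and z = (26,34,79). Then P_C(x) = y and P_C(z) = y, but for h = (2/3)x + (1/3)z, P_C(h) ≠ y. Hence the inverse image P_C^{-1}(y) of the metric projection onto C is not convex. -/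
/-- P_C(x) = y and P_C(z) = y, but P_C(h) ≠ y for
h = (2/3)x + (1/3)z; hence P_C⁻¹(y) is not convex. -/
theorem stmt8 (P : ℝ × ℝ × ℝ → ℝ × ℝ × ℝ) :
    let y : ℝ × ℝ × ℝ := (25, 37, 77)
    let C : Set (ℝ × ℝ × ℝ) := {p | ∃ t ∈ Set.Icc (0 : ℝ) 1, p = t • y}
    let x : ℝ × ℝ × ℝ := (28, 35, 76)
    let z : ℝ × ℝ × ℝ := (26, 34, 79)
    let h : ℝ × ℝ × ℝ := (2 / 3 : ℝ) • x + (1 / 3 : ℝ) • z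
    (∀ a u, P a = u ↔ u ∈ C ∧ ∀ w ∈ C, 0 ≤ dot (Jmap (a - u)) (u - w)) →
    P x = y ∧ P z = y ∧ P h ≠ y ∧ ¬ Convex ℝ {a | P a = y} := by
  intro y C x z h hiff
  have hyC : y ∈ C := ⟨1, ⟨zero_le_one, le_refl 1⟩, by simp⟩
  have hxy : x - y = ((3 : ℝ), (-2 : ℝ), (-1 : ℝ)) := by
    simp [x, y, Prod.ext_iff]; norm_num
  have hzy : z - y = ((1 : ℝ), (-3 : ℝ), (2 : ℝ)) := by
    simp [z, y, Prod.ext_iff]; norm_num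
  have hhy : h - y = ((7/3 : ℝ), (-7/3 : ℝ), (0 : ℝ)) := by
    simp [h, x, z, y, Prod.ext_iff, Prod.smul_def]; norm_num
  have hJx : Jmap (x - y) = (9 / norm3 (3, -2, -1), -4 / norm3 (3, -2, -1), -1 / norm3 (3, -2, -1)) := by
    rw [hxy, Jmap]
    rw [if_neg (by simp [Prod.ext_iff])]
    norm_num [Real.sign_of_pos, Real.sign_of_neg, abs_of_pos, abs_of_neg,
      show (0:ℝ) < 3 by norm_num, show (-2:ℝ) < 0 by norm_num, show (-1:ℝ) < 0 by norm_num]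
  have hJz : Jmap (z - y) = (1 / norm3 (1, -3, 2), -9 / norm3 (1, -3, 2), 4 / norm3 (1, -3, 2)) := by
    rw [hzy, Jmap]
    rw [if_neg (by simp [Prod.ext_iff])]
    norm_num [Real.sign_of_pos, Real.sign_of_neg, abs_of_pos, abs_of_neg,
      show (0:ℝ) < 1 by norm_num, show (-3:ℝ) < 0 by norm_num, show (0:ℝ) < 2 by norm_num]
  have hPx : P x = y := by
    rw [hiff]
    refine ⟨hyC, ?_⟩
    rintro w ⟨t, ht, rfl⟩
    rw [hJx]
    have : dot (9 / norm3 (3, -2, -1), -4 / norm3 (3, -2, -1), -1 / norm3 (3, -2, -1))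
        (y - t • y) = 0 := by
      simp [dot, y, Prod.smul_def, Prod.sub_def]
      ring
    rw [this]
  have hPz : P z = y := by
    rw [hiff]
    refine ⟨hyC, ?_⟩
    rintro w ⟨t, ht, rfl⟩
    rw [hJz]
    have : dot (1 / norm3 (1, -3, 2), -9 / norm3 (1, -3, 2), 4 / norm3 (1, -3, 2))
        (y - t • y) = 0 := by
      simp [dot, y, Prod.smul_def, Prod.sub_def]
      ring
    rw [this]
  have hPh : P h ≠ y := by
    intro hP
    have h0C : (0 : ℝ × ℝ × ℝ) ∈ C := ⟨0, ⟨le_refl 0, zero_le_one⟩, by simp⟩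
    have := ((hiff h y).mp hP).2 0 h0C
    rw [hhy] at this
    have hn : 0 < norm3 ((7/3 : ℝ), (-7/3 : ℝ), (0 : ℝ)) := by
      rw [norm3]
      apply Real.rpow_pos_of_pos
      norm_num
    rw [Jmap, if_neg (by simp [Prod.ext_iff])] at this
    have hsign : Real.sign (7/3 : ℝ) = 1 := Real.sign_of_pos (by norm_num)
    have hsign2 : Real.sign (-(7/3) : ℝ) = -1 := Real.sign_of_neg (by norm_num)
    simp only [dot, y] at this
    rw [show ((-7:ℝ)/3) = -(7/3) by norm_num] at this hn
    norm_num [hsign, hsign2, abs_of_pos, abs_of_neg, show (0:ℝ) < 7/3 by norm_num,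
      show (-(7/3):ℝ) < 0 by norm_num] at this
    have hd : 0 < 49 / 9 / norm3 ((7/3 : ℝ), (-(7/3) : ℝ), (0 : ℝ)) :=
      div_pos (by norm_num) hn
    rw [neg_div] at this
    nlinarith [this, hd]
  refine ⟨hPx, hPz, hPh, ?_⟩
  intro hconv
  have := hconv (Set.mem_setOf.mpr hPx) (Set.mem_setOf.mpr hPz)
    (by norm_num : (0:ℝ) ≤ 2/3) (by norm_num : (0:ℝ) ≤ 1/3) (by norm_num)
  exact hPh this
end

section
/- Let X be a uniformly convex and uniformly smooth Banach space, C ⊆ X nonempty closed convex, π_C : X* → C the generalized projection. Suppose ψ_n ⇀ ψ weak* in X*, {ψ_n} is norm bounded, and π_C(ψ_n) → y in norm for some y ∈ C. Then y = π_C(ψ). -/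
open Filter Topology

/-
Each `π_C(ψₙ)` satisfies the variational inequality `0 ≤ ⟨ψₙ - J π_C(ψₙ), π_C(ψₙ) - z⟩`
for `z ∈ C`. Both terms of this pairing pass to the limit: `⟨ψₙ, π_C(ψₙ) - z⟩` because for a
norm-bounded, pointwise convergent sequence of functionals `ψₙ(xₙ) → ψ(x)` whenever `xₙ → x` in
norm, and `⟨J π_C(ψₙ), π_C(ψₙ) - z⟩` by norm continuity of `J`. So `y` satisfies the
variational inequality for `ψ`, i.e. `y = π_C(ψ)`.
-/

theorem ContinuousLinearMap.tendsto_apply_of_tendsto_pointwise_of_isBoundedUnder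
    {𝕜 E F ι : Type*} [NontriviallyNormedField 𝕜] [SeminormedAddCommGroup E]
    [SeminormedAddCommGroup F] [NormedSpace 𝕜 E] [NormedSpace 𝕜 F] {l : Filter ι}
    {φ : ι → E →L[𝕜] F} {φ₀ : E →L[𝕜] F} {x : ι → E} {x₀ : E}
    (hφ : ∀ v, Tendsto (fun i => φ i v) l (𝓝 (φ₀ v)))
    (hbdd : IsBoundedUnder (· ≤ ·) l (norm ∘ φ)) (hx : Tendsto x l (𝓝 x₀)) :
    Tendsto (fun i => φ i (x i)) l (𝓝 (φ₀ x₀)) := by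
  have hsmall : Tendsto (fun i => φ i (x i - x₀)) l (𝓝 0) :=
    (tendsto_sub_nhds_zero_iff.mpr hx).op_zero_isBoundedUnder_le hbdd (fun v f => f v)
      fun v f => (f.le_opNorm v).trans_eq (mul_comm _ _)
  simpa [map_sub] using hsmall.add (hφ x₀)

theorem stmt12_general {X : Type*} [NormedAddCommGroup X] [NormedSpace ℝ X]
    (J : X → StrongDual ℝ X)
    (hJcont : Continuous J)
    (C : Set X)
    (pC : StrongDual ℝ X → X)
    (hchar : ∀ ψ u, pC ψ = u ↔ u ∈ C ∧ ∀ z ∈ C, 0 ≤ (ψ - J u) (u - z))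
    (ψn : ℕ → StrongDual ℝ X) (ψ : StrongDual ℝ X) (y : X) (hy : y ∈ C)
    (hweakstar : ∀ x : X, Tendsto (fun n => ψn n x) atTop (nhds (ψ x)))
    (hbdd : ∃ M : ℝ, ∀ n, ‖ψn n‖ ≤ M)
    (hconv : Tendsto (fun n => pC (ψn n)) atTop (nhds y)) :
    y = pC ψ := by
  obtain ⟨M, hM⟩ := hbdd
  refine ((hchar ψ y).mpr ⟨hy, fun z hz => ?_⟩).symm
  have hsub : Tendsto (fun n => pC (ψn n) - z) atTop (𝓝 (y - z)) :=
    hconv.sub tendsto_const_nhds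
  have hψ : Tendsto (fun n => ψn n (pC (ψn n) - z)) atTop (𝓝 (ψ (y - z))) :=
    ContinuousLinearMap.tendsto_apply_of_tendsto_pointwise_of_isBoundedUnder hweakstar
      (isBoundedUnder_of ⟨M, hM⟩) hsub
  have hJ : Tendsto (fun n => J (pC (ψn n)) (pC (ψn n) - z)) atTop (𝓝 (J y (y - z))) :=
    (isBoundedBilinearMap_apply.continuous.tendsto _).comp
      (((hJcont.tendsto y).comp hconv).prodMk_nhds hsub)
  exact ge_of_tendsto' (hψ.sub hJ) fun n => ((hchar (ψn n) _).mp rfl).2 z hz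

/-- if ψₙ ⇀ ψ weak*, {ψₙ} is norm bounded and π_C(ψₙ) → y in norm,
then y = π_C(ψ). -/
theorem stmt12 {X : Type*} [NormedAddCommGroup X] [NormedSpace ℝ X]
    (J : X → StrongDual ℝ X)
    (hdual : ∀ x, J x x = ‖x‖ ^ 2 ∧ ‖J x‖ = ‖x‖)
    (hJcont : Continuous J)
    (C : Set X) (hCne : C.Nonempty) (hCcl : IsClosed C) (hCcv : Convex ℝ C)
    (pC : StrongDual ℝ X → X)
    (hchar : ∀ ψ u, pC ψ = u ↔ u ∈ C ∧ ∀ z ∈ C, 0 ≤ (ψ - J u) (u - z))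
    (ψn : ℕ → StrongDual ℝ X) (ψ : StrongDual ℝ X) (y : X) (hy : y ∈ C)
    (hweakstar : ∀ x : X, Tendsto (fun n => ψn n x) atTop (nhds (ψ x)))
    (hbdd : ∃ M : ℝ, ∀ n, ‖ψn n‖ ≤ M)
    (hconv : Tendsto (fun n => pC (ψn n)) atTop (nhds y)) :
    y = pC ψ :=
  stmt12_general J hJcont C pC hchar ψn ψ y hy hweakstar hbdd hconv
end

section
/- Let X = ℝ³ with the 3-norm, y = (1,1,1)/∛3 (so ‖y‖₃ = 1), and C = {ty : t ∈ [0,1]}. Let v = (1.66, 1, −1) and w = (−1, 1, 1.66). Then ⟨Jv − Jy, y⟩ > 0 and ⟨Jw − Jy, y⟩ > 0, so Π_C(v) = y and Π_C(w) = y, but for h = (v+w)/2 = (0.33, 1, 0.33) one has ⟨Jh − Jy, y⟩ < 0, hence Π_C(h) ≠ y. Therefore the inverse image Π_C^{-1}(y) of the generalized metric projection is not convex. -/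
lemma rpow_third_lt {a b : ℝ} (ha : 0 ≤ a) (hb : 0 ≤ b) (hab : a < b ^ (3:ℕ)) :
    a ^ ((1:ℝ)/3) < b := by
  calc a ^ ((1:ℝ)/3) < ((b:ℝ) ^ (3:ℕ)) ^ ((1:ℝ)/3) :=
        Real.rpow_lt_rpow ha hab (by norm_num)
    _ = b := by rw [← Real.rpow_natCast b 3, ← Real.rpow_mul hb]; norm_num

lemma rpow_third_gt {a b : ℝ} (hb : 0 ≤ b) (hab : b ^ (3:ℕ) < a) :
    b < a ^ ((1:ℝ)/3) := by
  calc b = ((b:ℝ) ^ (3:ℕ)) ^ ((1:ℝ)/3) := by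
        rw [← Real.rpow_natCast b 3, ← Real.rpow_mul hb]; norm_num
    _ < a ^ ((1:ℝ)/3) := Real.rpow_lt_rpow (by positivity) hab (by norm_num)

section facts
-- abbreviations
noncomputable def T : ℝ := (3:ℝ) ^ ((1:ℝ)/3)
noncomputable def cc : ℝ := T⁻¹

lemma hT : 0 < T := Real.rpow_pos_of_pos (by norm_num) _
lemma hT3 : T ^ (3:ℕ) = 3 := by
  rw [T, ← Real.rpow_natCast ((3:ℝ)^((1:ℝ)/3)) 3, ← Real.rpow_mul (by norm_num)]; norm_num
lemma hc : 0 < cc := by rw [cc]; exact inv_pos.mpr hT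
lemma hc3 : cc ^ (3:ℕ) = 3⁻¹ := by rw [cc, inv_pow, hT3]

noncomputable def yy : ℝ × ℝ × ℝ := (((3 : ℝ) ^ ((1 : ℝ) / 3))⁻¹) • ((1 : ℝ), (1 : ℝ), (1 : ℝ))

lemma yy_eq : yy = (cc, cc, cc) := by
  simp [yy, cc, T, Prod.smul_def, smul_eq_mul]

lemma norm3_yy : norm3 yy = 1 := by
  rw [yy_eq]
  simp only [norm3, abs_of_pos hc]
  have : cc^3 + cc^3 + cc^3 = 1 := by rw [hc3]; norm_num
  rw [this, Real.one_rpow]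

lemma J_yy : Jmap yy = (cc^2, cc^2, cc^2) := by
  have h0 : yy ≠ 0 := by
    rw [yy_eq]; intro h; exact absurd (congrArg Prod.fst h) (by simpa using hc.ne')
  rw [Jmap, if_neg h0, norm3_yy, yy_eq]
  simp [abs_of_pos hc, Real.sign_of_pos hc]

end facts
section facts2
noncomputable def Nv : ℝ := (6.574296:ℝ) ^ ((1:ℝ)/3)
lemma hNv : 0 < Nv := Real.rpow_pos_of_pos (by norm_num) _

lemma norm3_v : norm3 (1.66, 1, -1) = Nv := by
  rw [norm3, Nv]
  have h1 : |(1.66:ℝ)| = 1.66 := abs_of_pos (by norm_num)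
  have h2 : |(1:ℝ)| = 1 := abs_of_pos (by norm_num)
  have h3 : |(-1:ℝ)| = 1 := by norm_num
  rw [h1, h2, h3]; norm_num

lemma J_v : Jmap (1.66, 1, -1) = (1.66^2 / Nv, 1 / Nv, -1 / Nv) := by
  rw [Jmap, if_neg (by intro h; have := congrArg Prod.fst h; norm_num at this), norm3_v]
  rw [Real.sign_of_pos (by norm_num : (0:ℝ) < 1.66), Real.sign_of_pos (by norm_num : (0:ℝ) < 1),
    Real.sign_of_neg (by norm_num : (-1:ℝ) < 0)]
  norm_num

lemma TNv_lt : T * Nv < 2.7556 := by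
  have : ((19.722888:ℝ)) ^ ((1:ℝ)/3) < 2.7556 := rpow_third_lt (by norm_num) (by norm_num) (by norm_num)
  calc T * Nv = (3 * 6.574296 : ℝ) ^ ((1:ℝ)/3) := (Real.mul_rpow (by norm_num) (by norm_num)).symm
    _ < 2.7556 := by norm_num at this ⊢; linarith

lemma dot_v_pos : 0 < dot (Jmap (1.66, 1, -1) - Jmap yy) yy := by
  rw [J_v, J_yy, yy_eq]
  have expand : dot ((1.66^2 / Nv, 1 / Nv, -1 / Nv) - (cc^2, cc^2, cc^2)) (cc, cc, cc)
      = 2.7556 * cc / Nv - 3 * cc^3 := by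
    simp only [dot, Prod.mk_sub_mk, Prod.fst, Prod.snd]
    ring
  rw [expand, hc3]
  have h1 : (1:ℝ) < 2.7556 / (T * Nv) := by
    rw [lt_div_iff₀ (mul_pos hT hNv)]; linarith [TNv_lt]
  have h2 : 2.7556 * cc / Nv = 2.7556 / (T * Nv) := by
    rw [cc]; field_simp
  rw [h2]; norm_num; linarith
end facts2
section facts3
lemma norm3_w : norm3 (-1, 1, 1.66) = Nv := by
  rw [norm3, Nv]
  have h1 : |(1.66:ℝ)| = 1.66 := abs_of_pos (by norm_num)
  have h2 : |(1:ℝ)| = 1 := abs_of_pos (by norm_num)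
  have h3 : |(-1:ℝ)| = 1 := by norm_num
  rw [h1, h2, h3]; norm_num

lemma J_w : Jmap (-1, 1, 1.66) = (-1 / Nv, 1 / Nv, 1.66^2 / Nv) := by
  rw [Jmap, if_neg (by intro h; have := congrArg Prod.fst h; norm_num at this), norm3_w]
  rw [Real.sign_of_pos (by norm_num : (0:ℝ) < 1.66), Real.sign_of_pos (by norm_num : (0:ℝ) < 1),
    Real.sign_of_neg (by norm_num : (-1:ℝ) < 0)]
  norm_num

lemma dot_w_pos : 0 < dot (Jmap (-1, 1, 1.66) - Jmap yy) yy := by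
  rw [J_w, J_yy, yy_eq]
  have expand : dot ((-1 / Nv, 1 / Nv, 1.66^2 / Nv) - (cc^2, cc^2, cc^2)) (cc, cc, cc)
      = 2.7556 * cc / Nv - 3 * cc^3 := by
    simp only [dot, Prod.mk_sub_mk, Prod.fst, Prod.snd]; ring
  rw [expand, hc3]
  have h1 : (1:ℝ) < 2.7556 / (T * Nv) := by
    rw [lt_div_iff₀ (mul_pos hT hNv)]; linarith [TNv_lt]
  have h2 : 2.7556 * cc / Nv = 2.7556 / (T * Nv) := by rw [cc]; field_simp
  rw [h2]; norm_num; linarith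

noncomputable def Nh : ℝ := (1.071874:ℝ) ^ ((1:ℝ)/3)
lemma hNh : 0 < Nh := Real.rpow_pos_of_pos (by norm_num) _

lemma norm3_h : norm3 (0.33, 1, 0.33) = Nh := by
  rw [norm3, Nh]
  have h1 : |(0.33:ℝ)| = 0.33 := abs_of_pos (by norm_num)
  have h2 : |(1:ℝ)| = 1 := abs_of_pos (by norm_num)
  rw [h1, h2]; norm_num

lemma J_h : Jmap (0.33, 1, 0.33) = (0.33^2 / Nh, 1 / Nh, 0.33^2 / Nh) := by
  rw [Jmap, if_neg (by intro h; have := congrArg Prod.fst h; norm_num at this), norm3_h]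
  rw [Real.sign_of_pos (by norm_num : (0:ℝ) < 0.33), Real.sign_of_pos (by norm_num : (0:ℝ) < 1)]
  norm_num

lemma TNh_gt : (1.2178:ℝ) < T * Nh := by
  have : (1.2178:ℝ) < ((3.215622:ℝ)) ^ ((1:ℝ)/3) := rpow_third_gt (by norm_num) (by norm_num)
  calc (1.2178:ℝ) < (3.215622:ℝ) ^ ((1:ℝ)/3) := this
    _ = T * Nh := by
        rw [T, Nh, ← Real.mul_rpow (by norm_num) (by norm_num)]; norm_num

lemma dot_h_neg : dot (Jmap (0.33, 1, 0.33) - Jmap yy) yy < 0 := by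
  rw [J_h, J_yy, yy_eq]
  have expand : dot ((0.33^2 / Nh, 1 / Nh, 0.33^2 / Nh) - (cc^2, cc^2, cc^2)) (cc, cc, cc)
      = 1.2178 * cc / Nh - 3 * cc^3 := by
    simp only [dot, Prod.mk_sub_mk, Prod.fst, Prod.snd]; ring
  rw [expand, hc3]
  have h1 : 1.2178 / (T * Nh) < 1 := by
    rw [div_lt_one (mul_pos hT hNh)]; linarith [TNh_gt]
  have h2 : 1.2178 * cc / Nh = 1.2178 / (T * Nh) := by rw [cc]; field_simp
  rw [h2]; norm_num; linarith
end facts3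
lemma dot_smul' (a b : ℝ × ℝ × ℝ) (s : ℝ) : dot a (s • b) = s * dot a b := by
  simp only [dot, Prod.smul_fst, Prod.smul_snd, smul_eq_mul]; ring


/-- Π_C(v) = y and Π_C(w) = y but Π_C(h) ≠ y for h = (v+w)/2;
hence Π_C⁻¹(y) is not convex. -/
theorem stmt14 (PiC : ℝ × ℝ × ℝ → ℝ × ℝ × ℝ) :
    let y : ℝ × ℝ × ℝ := (((3 : ℝ) ^ ((1 : ℝ) / 3))⁻¹) • ((1 : ℝ), (1 : ℝ), (1 : ℝ))
    let C : Set (ℝ × ℝ × ℝ) := {p | ∃ t ∈ Set.Icc (0 : ℝ) 1, p = t • y}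
    let v : ℝ × ℝ × ℝ := (1.66, 1, -1)
    let w : ℝ × ℝ × ℝ := (-1, 1, 1.66)
    let h : ℝ × ℝ × ℝ := (1 / 2 : ℝ) • (v + w)
    (∀ a u, PiC a = u ↔ u ∈ C ∧ ∀ z ∈ C, 0 ≤ dot (Jmap a - Jmap u) (u - z)) →
    0 < dot (Jmap v - Jmap y) y ∧ 0 < dot (Jmap w - Jmap y) y ∧
    PiC v = y ∧ PiC w = y ∧
    h = ((0.33 : ℝ), (1 : ℝ), (0.33 : ℝ)) ∧
    dot (Jmap h - Jmap y) y < 0 ∧ PiC h ≠ y ∧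
    ¬ Convex ℝ {a | PiC a = y} := by
  intro y C v w h hPiC
  have hyy : y = yy := rfl
  have hdv : 0 < dot (Jmap v - Jmap y) y := by rw [hyy]; exact dot_v_pos
  have hdw : 0 < dot (Jmap w - Jmap y) y := by rw [hyy]; exact dot_w_pos
  have hyC : y ∈ C := ⟨1, ⟨by norm_num, le_refl 1⟩, (one_smul ℝ y).symm⟩
  have hproj : ∀ a : ℝ × ℝ × ℝ, 0 < dot (Jmap a - Jmap y) y → PiC a = y := by
    intro a ha
    refine (hPiC a y).mpr ⟨hyC, ?_⟩
    rintro z ⟨t, ht, rfl⟩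
    have hsub : y - t • y = (1 - t) • y := by rw [sub_smul, one_smul]
    rw [hsub, dot_smul']
    exact mul_nonneg (by linarith [ht.2]) ha.le
  have hh : h = ((0.33 : ℝ), (1 : ℝ), (0.33 : ℝ)) := by
    show (1/2 : ℝ) • (((1.66 : ℝ), (1:ℝ), (-1:ℝ)) + ((-1:ℝ), (1:ℝ), (1.66:ℝ))) = _
    norm_num [Prod.smul_def, Prod.mk_add_mk, Prod.ext_iff, smul_eq_mul]
  have hdh : dot (Jmap h - Jmap y) y < 0 := by rw [hh, hyy]; exact dot_h_neg
  have hne : PiC h ≠ y := by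
    intro he
    obtain ⟨-, hall⟩ := (hPiC h y).mp he
    have h0C : (0 : ℝ × ℝ × ℝ) ∈ C := ⟨0, ⟨le_refl 0, by norm_num⟩, (zero_smul ℝ y).symm⟩
    have := hall 0 h0C
    rw [sub_zero] at this
    linarith
  refine ⟨hdv, hdw, hproj v hdv, hproj w hdw, hh, hdh, hne, ?_⟩
  intro hconv
  have hmid := hconv (Set.mem_setOf.mpr (hproj v hdv)) (Set.mem_setOf.mpr (hproj w hdw))
    (by norm_num : (0:ℝ) ≤ 1/2) (by norm_num : (0:ℝ) ≤ 1/2) (by norm_num : (1/2:ℝ) + 1/2 = 1)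
  have hcomb : (1/2 : ℝ) • v + (1/2 : ℝ) • w = h := (smul_add _ _ _).symm
  rw [hcomb] at hmid
  exact hne hmid
end

section
/- Let X be a uniformly convex and uniformly smooth Banach space, C ⊆ X nonempty closed convex, Π_C the generalized metric projection. Suppose {x_n} is norm bounded, J x_n ⇀ J x weak* in X*, and Π_C(x_n) → y in norm for some y ∈ C. Then y = Π_C(x). -/
open Filter Topology

/-! Passing to the limit in the variational inequality `0 ≤ ⟨J xₙ - J uₙ, uₙ - z⟩`, where
`uₙ = Π_C(xₙ)`, gives `0 ≤ ⟨J x - J y, y - z⟩` for every `z ∈ C`, i.e. `y = Π_C(x)`. The term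
`⟨J uₙ, uₙ - z⟩` converges by norm continuity of `J`; the term `⟨J xₙ, uₙ - z⟩` pairs a bounded,
weak* convergent sequence of functionals with a norm convergent sequence of vectors, and such
pairings converge. -/

section WeakStarPairing

variable {𝕜 E ι : Type*} [NontriviallyNormedField 𝕜] [NormedAddCommGroup E] [NormedSpace 𝕜 E]
  {l : Filter ι}

theorem tendsto_apply_of_bounded_of_weakStar {f : ι → StrongDual 𝕜 E} {f₀ : StrongDual 𝕜 E}
    {M : ℝ} (hM : ∀ i, ‖f i‖ ≤ M) (hf : ∀ z, Tendsto (fun i => f i z) l (𝓝 (f₀ z)))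
    {v : ι → E} {v₀ : E} (hv : Tendsto v l (𝓝 v₀)) :
    Tendsto (fun i => f i (v i)) l (𝓝 (f₀ v₀)) := by
  have herr : Tendsto (fun i => f i (v i - v₀)) l (𝓝 0) := by
    have hdist : Tendsto (fun i => M * ‖v i - v₀‖) l (𝓝 0) := by
      simpa using (tendsto_iff_norm_sub_tendsto_zero.mp hv).const_mul M
    refine squeeze_zero_norm (fun i => ?_) hdist
    calc ‖f i (v i - v₀)‖ ≤ ‖f i‖ * ‖v i - v₀‖ := (f i).le_opNorm _
      _ ≤ M * ‖v i - v₀‖ := by gcongr; exact hM i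
  simpa [map_sub] using (hf v₀).add herr

end WeakStarPairing

theorem stmt16_general {X : Type*} [NormedAddCommGroup X] [NormedSpace ℝ X]
    (J : X → StrongDual ℝ X)
    (hdual : ∀ w, J w w = ‖w‖ ^ 2 ∧ ‖J w‖ = ‖w‖)
    (hJcont : Continuous J)
    (C : Set X)
    (PiC : X → X)
    (hchar : ∀ a b, PiC a = b ↔ b ∈ C ∧ ∀ z ∈ C, 0 ≤ (J a - J b) (b - z))
    (x : ℕ → X) (x₀ : X) (y : X) (hy : y ∈ C)
    (hbdd : ∃ M : ℝ, ∀ n, ‖x n‖ ≤ M)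
    (hweakstar : ∀ z : X, Tendsto (fun n => J (x n) z) atTop (nhds (J x₀ z)))
    (hconv : Tendsto (fun n => PiC (x n)) atTop (nhds y)) :
    y = PiC x₀ := by
  obtain ⟨M, hM⟩ := hbdd
  refine ((hchar x₀ y).mpr ⟨hy, fun z hz => ?_⟩).symm
  have hvar : ∀ n, 0 ≤ (J (x n) - J (PiC (x n))) (PiC (x n) - z) :=
    fun n => ((hchar (x n) _).mp rfl).2 z hz
  have hsub : Tendsto (fun n => PiC (x n) - z) atTop (𝓝 (y - z)) := hconv.sub_const z
  have hJx : Tendsto (fun n => J (x n) (PiC (x n) - z)) atTop (𝓝 (J x₀ (y - z))) :=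
    tendsto_apply_of_bounded_of_weakStar (fun n => (hdual (x n)).2 ▸ hM n) hweakstar hsub
  have hJu : Tendsto (fun n => J (PiC (x n)) (PiC (x n) - z)) atTop (𝓝 (J y (y - z))) :=
    (isBoundedBilinearMap_apply.continuous.tendsto (J y, y - z)).comp
      (((hJcont.tendsto y).comp hconv).prodMk_nhds hsub)
  exact ge_of_tendsto (hJx.sub hJu) (Eventually.of_forall hvar)

/-- if {xₙ} is bounded, Jxₙ ⇀ Jx weak* and Π_C(xₙ) → y in norm,
then y = Π_C(x). -/
theorem stmt16 {X : Type*} [NormedAddCommGroup X] [NormedSpace ℝ X]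
    (J : X → StrongDual ℝ X)
    (hdual : ∀ w, J w w = ‖w‖ ^ 2 ∧ ‖J w‖ = ‖w‖)
    (hJcont : Continuous J)
    (C : Set X) (hCne : C.Nonempty) (hCcl : IsClosed C) (hCcv : Convex ℝ C)
    (PiC : X → X)
    (hchar : ∀ a b, PiC a = b ↔ b ∈ C ∧ ∀ z ∈ C, 0 ≤ (J a - J b) (b - z))
    (x : ℕ → X) (x₀ : X) (y : X) (hy : y ∈ C)
    (hbdd : ∃ M : ℝ, ∀ n, ‖x n‖ ≤ M)
    (hweakstar : ∀ z : X, Tendsto (fun n => J (x n) z) atTop (nhds (J x₀ z)))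
    (hconv : Tendsto (fun n => PiC (x n)) atTop (nhds y)) :
    y = PiC x₀ :=
  stmt16_general J hdual hJcont C PiC hchar x x₀ y hy hbdd hweakstar hconv
end

section
/- Let X = ℝ³ with the 3-norm, φ = (1,1,1), u = (0,−1,1), v = (−1,1,0), and ψ = (3/4)Jv + (1/4)Ju = (−3,2,1)/(4∛2). Let J* be the duality map of the 3/2-norm on the dual. Then J*ψ is a positive multiple of (−√3, √2, 1), and since −√3 + √2 + 1 > 0, we have φ · (J*ψ) > 0. -/
/-- The duality map of the 3/2-norm on the dual of (ℝ³, ‖·‖₃). -/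
noncomputable def Jstar32 (ψ : ℝ × ℝ × ℝ) : ℝ × ℝ × ℝ :=
  ((norm32 ψ) ^ ((1 : ℝ) / 2)) •
    (|ψ.1| ^ ((1 : ℝ) / 2) * Real.sign ψ.1,
     |ψ.2.1| ^ ((1 : ℝ) / 2) * Real.sign ψ.2.1,
     |ψ.2.2| ^ ((1 : ℝ) / 2) * Real.sign ψ.2.2)

/-- for ψ = (−3,2,1)/(4∛2) one has J*ψ = c(−√3, √2, 1) with c > 0,
and φ·(J*ψ) > 0 since √2 + 1 > √3. -/
theorem stmt17 :
    let φ : ℝ × ℝ × ℝ := (1, 1, 1)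
    let ψ : ℝ × ℝ × ℝ := ((4 * (2 : ℝ) ^ ((1 : ℝ) / 3))⁻¹) • ((-3 : ℝ), (2 : ℝ), (1 : ℝ))
    Real.sqrt 3 < Real.sqrt 2 + 1 ∧
    (∃ c : ℝ, 0 < c ∧ Jstar32 ψ = c • (-(Real.sqrt 3), Real.sqrt 2, (1 : ℝ))) ∧
    0 < dot φ (Jstar32 ψ) := by
  intro φ ψ
  have hsqrt : Real.sqrt 3 < Real.sqrt 2 + 1 := by
    nlinarith [Real.sq_sqrt (show (0:ℝ) ≤ 2 by norm_num),
      Real.sq_sqrt (show (0:ℝ) ≤ 3 by norm_num),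
      Real.sqrt_nonneg 2, Real.sqrt_nonneg 3,
      Real.sqrt_pos.mpr (show (0:ℝ) < 2 by norm_num)]
  set a : ℝ := (4 * (2 : ℝ) ^ ((1 : ℝ) / 3))⁻¹ with ha_def
  have ha : 0 < a := by
    have : (0:ℝ) < (2:ℝ) ^ ((1:ℝ)/3) := Real.rpow_pos_of_pos (by norm_num) _
    positivity
  have hψ1 : ψ.1 = a * (-3) := rfl
  have hψ2 : ψ.2.1 = a * 2 := rfl
  have hψ3 : ψ.2.2 = a * 1 := rfl
  have habs1 : |ψ.1| = 3 * a := by rw [hψ1]; rw [abs_of_neg (by nlinarith)]; ring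
  have habs2 : |ψ.2.1| = 2 * a := by rw [hψ2]; rw [abs_of_pos (by nlinarith)]; ring
  have habs3 : |ψ.2.2| = a := by rw [hψ3]; rw [abs_of_pos (by nlinarith)]; ring
  have hs1 : Real.sign ψ.1 = -1 := Real.sign_of_neg (by rw [hψ1]; nlinarith)
  have hs2 : Real.sign ψ.2.1 = 1 := Real.sign_of_pos (by rw [hψ2]; nlinarith)
  have hs3 : Real.sign ψ.2.2 = 1 := Real.sign_of_pos (by rw [hψ3]; nlinarith)
  have hn : 0 < norm32 ψ := by
    rw [norm32, habs1, habs2, habs3]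
    have h1 : (0:ℝ) < (3*a) ^ ((3:ℝ)/2) := Real.rpow_pos_of_pos (by linarith) _
    have h2 : (0:ℝ) < (2*a) ^ ((3:ℝ)/2) := Real.rpow_pos_of_pos (by linarith) _
    have h3 : (0:ℝ) < a ^ ((3:ℝ)/2) := Real.rpow_pos_of_pos ha _
    exact Real.rpow_pos_of_pos (by linarith) _
  set c : ℝ := (norm32 ψ) ^ ((1:ℝ)/2) * Real.sqrt a with hc_def
  have hc : 0 < c := mul_pos (Real.rpow_pos_of_pos hn _) (Real.sqrt_pos.mpr ha)
  have hJ : Jstar32 ψ = c • (-(Real.sqrt 3), Real.sqrt 2, (1 : ℝ)) := by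
    rw [Jstar32, habs1, habs2, habs3, hs1, hs2, hs3]
    have e1 : (3*a) ^ ((1:ℝ)/2) = Real.sqrt 3 * Real.sqrt a := by
      rw [← Real.sqrt_eq_rpow, Real.sqrt_mul (by norm_num)]
    have e2 : (2*a) ^ ((1:ℝ)/2) = Real.sqrt 2 * Real.sqrt a := by
      rw [← Real.sqrt_eq_rpow, Real.sqrt_mul (by norm_num)]
    have e3 : a ^ ((1:ℝ)/2) = Real.sqrt a := (Real.sqrt_eq_rpow a).symm
    rw [e1, e2, e3]
    simp only [Prod.smul_mk, smul_eq_mul, Prod.mk.injEq, hc_def]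
    refine ⟨by ring, by ring, by ring⟩
  refine ⟨hsqrt, ⟨c, hc, hJ⟩, ?_⟩
  rw [hJ]
  simp only [dot, Prod.smul_mk, smul_eq_mul]
  nlinarith [hc, hsqrt]
end
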